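/- Let m ≥ 1 and n', n'' ≥ 0 be integers, let M = ℤ4^{2m} × ℤ2^{2n'} × ℤ4^{n''}, and let C ⊆ M be an additive 1-perfect code with respect to the Doob D(m, n'+n'')-metric. Then the map e ↦ e + C is a bijection from the set consisting of the zero vertex together with all vertices of weight 1 (vertices at Doob distance exactly 1 from the zero vertex) onto the quotient group M/C; moreover, if e is a weight-1 vertex whose additive order in M is 4, then the coset e + C has order 4 in M/C. -/

import Mathlib

open SimpleGraph

/-- The box (Cartesian) product of an indexed family of simple graphs. -/
def boxPi {ι : Type*} {V : ι → Type*} (G : ∀ i, SimpleGraph (V i)) :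
    SimpleGraph (∀ i, V i) where
  Adj x y := ∃ i, (G i).Adj (x i) (y i) ∧ ∀ j, j ≠ i → x j = y j
  symm := by
    constructor
    rintro x y ⟨i, h, he⟩
    exact ⟨i, (G i).symm.symm _ _ h, fun j hj => (he j hj).symm⟩
  loopless := by
    constructor
    rintro x ⟨i, h, -⟩
    exact (G i).loopless.irrefl _ h

/-- The Shrikhande graph on `(ZMod 4) × (ZMod 4)`. -/
def Shri : SimpleGraph (ZMod 4 × ZMod 4) where
  Adj a b := a - b ∈
    ({(0, 1), (1, 0), (1, 1), (0, 3), (3, 0), (3, 3)} : Finset (ZMod 4 × ZMod 4))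
  symm := by
    have h : ∀ a b : ZMod 4 × ZMod 4,
        a - b ∈ ({(0, 1), (1, 0), (1, 1), (0, 3), (3, 0), (3, 3)} :
          Finset (ZMod 4 × ZMod 4)) →
        b - a ∈ ({(0, 1), (1, 0), (1, 1), (0, 3), (3, 0), (3, 3)} :
          Finset (ZMod 4 × ZMod 4)) := by decide
    constructor
    exact fun a b hab => h a b hab
  loopless := by
    constructor
    intro a h
    rw [sub_self] at h
    revert h
    decide

/-- `C` is a 1-perfect code in `G`: every vertex is at graph distance at most 1
(i.e., equal or adjacent) from exactly one element of `C`. -/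
def IsPerfectCode {V : Type*} (G : SimpleGraph V) (C : Set V) : Prop :=
  ∀ v : V, ∃! c : V, c ∈ C ∧ (v = c ∨ G.Adj v c)

/-- The vertex set `ℤ₄^{2m} × ℤ₂^{2n'} × ℤ₄^{n''}`, the consecutive pairs of
`ZMod 4`- (resp. `ZMod 2`-) coordinates being grouped together. -/
abbrev DoobVtx (m n' n'' : ℕ) : Type :=
  (Fin m → ZMod 4 × ZMod 4) × (Fin n' → ZMod 2 × ZMod 2) × (Fin n'' → ZMod 4)

/-- The Doob graph `D(m, n' + n'')` on `ℤ₄^{2m} × ℤ₂^{2n'} × ℤ₄^{n''}`. -/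
def DoobGraphZ (m n' n'' : ℕ) : SimpleGraph (DoobVtx m n' n'') :=
  (boxPi fun _ : Fin m => Shri) □
    ((boxPi fun _ : Fin n' => (⊤ : SimpleGraph (ZMod 2 × ZMod 2))) □
      (boxPi fun _ : Fin n'' => (⊤ : SimpleGraph (ZMod 4))))

/-!
The Doob graph is a Cayley graph of `M`: adjacency is invariant under translations. Hence
`x` is within distance one of `c` iff `x - c` lies in the ball `B` of radius one around `0`,
and for an additive code `C` the perfect-code property says exactly that every coset of `C`
meets `B` in exactly one point. The ball is closed under negation, so if `e ∈ B` and `2e ∈ C`,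
then `e` and `-e` are points of `B` in the same coset, whence `2e = 0`; so an element of `B` of
order `4` keeps order `4` modulo `C`.
-/

namespace SimpleGraph

variable {α : Type*}

def IsTranslationInvariant [Add α] (G : SimpleGraph α) : Prop :=
  ∀ a b t : α, G.Adj (a + t) (b + t) ↔ G.Adj a b

theorem isTranslationInvariant_top [Add α] [IsRightCancelAdd α] :
    (⊤ : SimpleGraph α).IsTranslationInvariant := by
  intro a b t
  simp

theorem IsTranslationInvariant.boxPi {ι : Type*} {V : ι → Type*} [∀ i, Add (V i)]
    [∀ i, IsRightCancelAdd (V i)] {G : ∀ i, SimpleGraph (V i)}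
    (hG : ∀ i, (G i).IsTranslationInvariant) : (boxPi G).IsTranslationInvariant := by
  intro x y t
  have hG' : ∀ i (a b t : V i), (G i).Adj (a + t) (b + t) ↔ (G i).Adj a b := hG
  simp only [_root_.boxPi, Pi.add_apply, hG', add_left_inj]

theorem IsTranslationInvariant.boxProd {β : Type*} [Add α] [IsRightCancelAdd α] [Add β]
    [IsRightCancelAdd β] {G : SimpleGraph α} {H : SimpleGraph β}
    (hG : G.IsTranslationInvariant) (hH : H.IsTranslationInvariant) :
    (G □ H).IsTranslationInvariant := by
  intro x y t
  simp only [boxProd_adj, Prod.fst_add, Prod.snd_add, hG _ _ t.1, hH _ _ t.2, add_left_inj]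

section AddCommGroup

variable [AddCommGroup α] {G : SimpleGraph α}

theorem IsTranslationInvariant.adj_iff_adj_zero_sub (hG : G.IsTranslationInvariant) (a b : α) :
    G.Adj a b ↔ G.Adj 0 (b - a) := by
  rw [← hG 0 (b - a) a, zero_add, sub_add_cancel]

theorem IsTranslationInvariant.adj_zero_neg (hG : G.IsTranslationInvariant) {e : α}
    (he : G.Adj 0 e) : G.Adj 0 (-e) := by
  have h := (hG 0 e (-e)).2 he
  rw [zero_add, add_neg_cancel] at h
  exact h.symm

theorem IsTranslationInvariant.eq_or_adj_iff (hG : G.IsTranslationInvariant) (x c : α) :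
    (x = c ∨ G.Adj x c) ↔ (x - c = 0 ∨ G.Adj 0 (x - c)) := by
  rw [sub_eq_zero, G.adj_comm x c, hG.adj_iff_adj_zero_sub c x]

end AddCommGroup

end SimpleGraph

namespace IsPerfectCode

variable {α : Type*} [AddCommGroup α] {G : SimpleGraph α} {C : AddSubgroup α}

theorem bijective_mk_ball (hG : G.IsTranslationInvariant) (hC : IsPerfectCode G (C : Set α)) :
    Function.Bijective fun e : {e : α // e = 0 ∨ G.Adj 0 e} => (e.val : α ⧸ C) := by
  constructor
  · rintro ⟨e₁, he₁⟩ ⟨e₂, he₂⟩ h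
    replace h : e₁ - e₂ ∈ C := QuotientAddGroup.eq_iff_sub_mem.1 h
    -- both `0` and `e₁ - e₂` are codewords within distance one of `e₁`
    obtain ⟨c, -, huniq⟩ := hC e₁
    have h0 := huniq 0 ⟨C.zero_mem, (hG.eq_or_adj_iff _ _).2 (by rwa [sub_zero])⟩
    have h12 := huniq (e₁ - e₂) ⟨h, (hG.eq_or_adj_iff _ _).2 (by rwa [sub_sub_cancel])⟩
    exact Subtype.ext (sub_eq_zero.1 (h12.trans h0.symm))
  · intro q
    induction q using QuotientAddGroup.induction_on with
    | H v =>
      obtain ⟨c, ⟨hc, hvc⟩, -⟩ := hC v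
      refine ⟨⟨v - c, (hG.eq_or_adj_iff v c).1 hvc⟩, QuotientAddGroup.eq_iff_sub_mem.2 ?_⟩
      rwa [sub_sub_cancel_left, neg_mem_iff]

theorem addOrderOf_mk_eq_four (hG : G.IsTranslationInvariant) (hC : IsPerfectCode G (C : Set α))
    {e : α} (he : G.Adj 0 e) (h4 : addOrderOf e = 4) : addOrderOf (e : α ⧸ C) = 4 := by
  have h2 : ¬ 2 ^ 1 • (e : α ⧸ C) = 0 := by
    intro h
    have hneg : (e : α ⧸ C) = ((-e : α) : α ⧸ C) := by
      rw [QuotientAddGroup.mk_neg, eq_neg_iff_add_eq_zero, ← two_nsmul, ← pow_one 2, h]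
    have he_neg : e = -e := congrArg Subtype.val <|
      (hC.bijective_mk_ball hG).1 (a₁ := ⟨e, .inr he⟩) (a₂ := ⟨-e, .inr (hG.adj_zero_neg he)⟩) hneg
    have h2e : 2 • e = 0 := by
      rw [two_nsmul]
      exact eq_neg_iff_add_eq_zero.1 he_neg
    have := addOrderOf_le_of_nsmul_eq_zero two_pos h2e
    omega
  have h4' : 2 ^ (1 + 1) • (e : α ⧸ C) = 0 := by
    rw [← QuotientAddGroup.mk_nsmul, show 2 ^ (1 + 1) = addOrderOf e by rw [h4]; rfl,
      addOrderOf_nsmul_eq_zero, QuotientAddGroup.mk_zero]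
  exact addOrderOf_eq_prime_pow h2 h4'

end IsPerfectCode

theorem isTranslationInvariant_shri : Shri.IsTranslationInvariant := by
  intro a b t
  show (a + t) - (b + t) ∈ _ ↔ a - b ∈ _
  rw [add_sub_add_right_eq_sub]

theorem isTranslationInvariant_doobGraphZ (m n' n'' : ℕ) :
    (DoobGraphZ m n' n'').IsTranslationInvariant :=
  (IsTranslationInvariant.boxPi fun _ => isTranslationInvariant_shri).boxProd
    ((IsTranslationInvariant.boxPi fun _ => isTranslationInvariant_top).boxProd
      (IsTranslationInvariant.boxPi fun _ => isTranslationInvariant_top))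

theorem coset_map_bijective_on_ball_general (m n' n'' : ℕ)
    (C : AddSubgroup (DoobVtx m n' n''))
    (hC : IsPerfectCode (DoobGraphZ m n' n'') (C : Set (DoobVtx m n' n''))) :
    Function.Bijective
      (fun e : {e : DoobVtx m n' n'' // e = 0 ∨ (DoobGraphZ m n' n'').Adj 0 e} =>
        (QuotientAddGroup.mk e.val : DoobVtx m n' n'' ⧸ C)) ∧
    ∀ e : DoobVtx m n' n'', (DoobGraphZ m n' n'').Adj 0 e → addOrderOf e = 4 →
      addOrderOf (QuotientAddGroup.mk e : DoobVtx m n' n'' ⧸ C) = 4 := by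
  have hG := isTranslationInvariant_doobGraphZ m n' n''
  exact ⟨hC.bijective_mk_ball hG, fun _ he h4 => hC.addOrderOf_mk_eq_four hG he h4⟩

theorem coset_map_bijective_on_ball (m n' n'' : ℕ) (hm : 1 ≤ m)
    (C : AddSubgroup (DoobVtx m n' n''))
    (hC : IsPerfectCode (DoobGraphZ m n' n'') (C : Set (DoobVtx m n' n''))) :
    Function.Bijective
      (fun e : {e : DoobVtx m n' n'' // e = 0 ∨ (DoobGraphZ m n' n'').Adj 0 e} =>
        (QuotientAddGroup.mk e.val : DoobVtx m n' n'' ⧸ C)) ∧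
    ∀ e : DoobVtx m n' n'', (DoobGraphZ m n' n'').Adj 0 e → addOrderOf e = 4 →
      addOrderOf (QuotientAddGroup.mk e : DoobVtx m n' n'' ⧸ C) = 4 :=
  coset_map_bijective_on_ball_general m n' n'' C hC
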